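/- On ℝ⁸ define ω₀ = dx₁₂ + dx₃₄ + dx₅₆ + dx₇₈ and the complex-valued 4-form θ₀ = (dx₁ + i dx₂) ∧ (dx₃ + i dx₄) ∧ (dx₅ + i dx₆) ∧ (dx₇ + i dx₈). Then Ω₀ = ½ ω₀ ∧ ω₀ + Re θ₀ as alternating 4-forms on ℝ⁸. Consequently, identifying ℂ⁴ ≅ ℝ⁸ via z_j = x_{2j−1} + i x_{2j}, every U in the special unitary group SU(4), viewed as a real-linear map ℝ⁸ → ℝ⁸, satisfies U*Ω₀ = Ω₀ (so SU(4) is a subgroup of Spin(7)). -/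

import Mathlib

open scoped RealInnerProductSpace

noncomputable section

/-- ℝ⁸ with its standard Euclidean inner product. -/
abbrev E8 := EuclideanSpace ℝ (Fin 8)

/-- The coordinate 4-form dx_i ∧ dx_j ∧ dx_k ∧ dx_l on ℝ⁸ (indices 0,…,7 for x₁,…,x₈). -/
def quad8 (i j k l : Fin 8) (a b c d : E8) : ℝ :=
  Matrix.det !![a i, a j, a k, a l; b i, b j, b k, b l;
                c i, c j, c k, c l; d i, d j, d k, d l]

/-- The Spin(7) 4-form Ω₀ = dx₁₂₃₄ + dx₁₂₅₆ + dx₁₂₇₈ + dx₁₃₅₇ − dx₁₃₆₈ − dx₁₄₅₈ − dx₁₄₆₇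
    − dx₂₃₅₈ − dx₂₃₆₇ − dx₂₄₅₇ + dx₂₄₆₈ + dx₃₄₅₆ + dx₃₄₇₈ + dx₅₆₇₈. -/
def Omega0 (a b c d : E8) : ℝ :=
  quad8 0 1 2 3 a b c d + quad8 0 1 4 5 a b c d + quad8 0 1 6 7 a b c d
    + quad8 0 2 4 6 a b c d - quad8 0 2 5 7 a b c d - quad8 0 3 4 7 a b c d
    - quad8 0 3 5 6 a b c d - quad8 1 2 4 7 a b c d - quad8 1 2 5 6 a b c d
    - quad8 1 3 4 6 a b c d + quad8 1 3 5 7 a b c d + quad8 2 3 4 5 a b c d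
    + quad8 2 3 6 7 a b c d + quad8 4 5 6 7 a b c d

/-- The standard Kähler 2-form ω₀ = dx₁₂ + dx₃₄ + dx₅₆ + dx₇₈ of ℂ⁴ ≅ ℝ⁸. -/
def omega8 (u v : E8) : ℝ :=
  (u 0 * v 1 - u 1 * v 0) + (u 2 * v 3 - u 3 * v 2)
    + (u 4 * v 5 - u 5 * v 4) + (u 6 * v 7 - u 7 * v 6)

/-- The complex coordinate 1-forms dz_j = dx_{2j−1} + i dx_{2j}, j = 1,…,4. -/
def dz8 (j : Fin 4) (u : E8) : ℂ :=
  ![(u 0 : ℂ) + u 1 * Complex.I, (u 2 : ℂ) + u 3 * Complex.I,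
    (u 4 : ℂ) + u 5 * Complex.I, (u 6 : ℂ) + u 7 * Complex.I] j

/-- The complex volume 4-form θ₀ = dz₁ ∧ dz₂ ∧ dz₃ ∧ dz₄ of ℂ⁴ ≅ ℝ⁸. -/
def theta8 (a b c d : E8) : ℂ :=
  Matrix.det !![dz8 0 a, dz8 1 a, dz8 2 a, dz8 3 a;
                dz8 0 b, dz8 1 b, dz8 2 b, dz8 3 b;
                dz8 0 c, dz8 1 c, dz8 2 c, dz8 3 c;
                dz8 0 d, dz8 1 d, dz8 2 d, dz8 3 d]

/-- The complex coordinates z_j = x_{2j−1} + i x_{2j} of a vector in ℝ⁸ ≅ ℂ⁴. -/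
def cvec8 (v : E8) : Fin 4 → ℂ :=
  ![v 0 + v 1 * Complex.I, v 2 + v 3 * Complex.I,
    v 4 + v 5 * Complex.I, v 6 + v 7 * Complex.I]

/-- The identification ℂ⁴ ≅ ℝ⁸, z_j = x_{2j−1} + i x_{2j}. -/
def toE8 (z : Fin 4 → ℂ) : E8 :=
  (WithLp.equiv 2 (Fin 8 → ℝ)).symm
    ![(z 0).re, (z 0).im, (z 1).re, (z 1).im, (z 2).re, (z 2).im, (z 3).re, (z 3).im]

/-- The real-linear map ℝ⁸ → ℝ⁸ induced by a complex 4×4 matrix U via ℂ⁴ ≅ ℝ⁸. -/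
def Amap8 (U : Matrix (Fin 4) (Fin 4) ℂ) (v : E8) : E8 :=
  toE8 (U.mulVec (cvec8 v))

section Aux
open scoped Matrix

theorem det_fin_four' {R : Type*} [CommRing R] (A : Matrix (Fin 4) (Fin 4) R) :
    A.det =
      A 0 0 * A 1 1 * A 2 2 * A 3 3 - A 0 0 * A 1 1 * A 2 3 * A 3 2 -
      A 0 0 * A 1 2 * A 2 1 * A 3 3 + A 0 0 * A 1 2 * A 2 3 * A 3 1 +
      A 0 0 * A 1 3 * A 2 1 * A 3 2 - A 0 0 * A 1 3 * A 2 2 * A 3 1 -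
      A 0 1 * A 1 0 * A 2 2 * A 3 3 + A 0 1 * A 1 0 * A 2 3 * A 3 2 +
      A 0 1 * A 1 2 * A 2 0 * A 3 3 - A 0 1 * A 1 2 * A 2 3 * A 3 0 -
      A 0 1 * A 1 3 * A 2 0 * A 3 2 + A 0 1 * A 1 3 * A 2 2 * A 3 0 +
      A 0 2 * A 1 0 * A 2 1 * A 3 3 - A 0 2 * A 1 0 * A 2 3 * A 3 1 -
      A 0 2 * A 1 1 * A 2 0 * A 3 3 + A 0 2 * A 1 1 * A 2 3 * A 3 0 +
      A 0 2 * A 1 3 * A 2 0 * A 3 1 - A 0 2 * A 1 3 * A 2 1 * A 3 0 -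
      A 0 3 * A 1 0 * A 2 1 * A 3 2 + A 0 3 * A 1 0 * A 2 2 * A 3 1 +
      A 0 3 * A 1 1 * A 2 0 * A 3 2 - A 0 3 * A 1 1 * A 2 2 * A 3 0 -
      A 0 3 * A 1 2 * A 2 0 * A 3 1 + A 0 3 * A 1 2 * A 2 1 * A 3 0 := by
  simp [Matrix.det_succ_row_zero, Fin.sum_univ_succ,
    show (Fin.succ 2 : Fin 4) = 3 from rfl,
    show Fin.succAbove (2 : Fin 4) (2 : Fin 3) = 3 from rfl,
    show Fin.succAbove (1 : Fin 4) (2 : Fin 3) = 3 from rfl,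
    show Fin.succAbove (3 : Fin 4) (2 : Fin 3) = 2 from rfl]
  ring

set_option maxHeartbeats 4000000 in
theorem Omega0_part1 (a b c d : E8) :
    Omega0 a b c d =
      (1 / 2 : ℝ) *
        (omega8 a b * omega8 c d - omega8 a c * omega8 b d + omega8 a d * omega8 b c
          + omega8 b c * omega8 a d - omega8 b d * omega8 a c + omega8 c d * omega8 a b)
      + (theta8 a b c d).re := by
  simp [Omega0, quad8, omega8, theta8, dz8, det_fin_four', Complex.add_re, Complex.add_im,
    Complex.mul_re, Complex.mul_im, Complex.I_re, Complex.I_im, Complex.ofReal_re,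
    Complex.ofReal_im]
  ring

theorem cvec8_toE8 (z : Fin 4 → ℂ) : cvec8 (toE8 z) = z := by
  funext j
  fin_cases j <;>
    simp [cvec8, toE8, WithLp.equiv_symm_apply, PiLp.toLp_apply] <;>
    exact (Complex.re_add_im _)

theorem cvec8_Amap8 (U : Matrix (Fin 4) (Fin 4) ℂ) (v : E8) :
    cvec8 (Amap8 U v) = U.mulVec (cvec8 v) := by
  rw [Amap8, cvec8_toE8]

theorem omega8_eq_dot (u v : E8) :
    omega8 u v = (star (cvec8 u) ⬝ᵥ cvec8 v).im := by
  simp [omega8, cvec8, dotProduct, Fin.sum_univ_four, Complex.add_im, Complex.mul_im,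
    Complex.mul_re]
  ring

theorem dot_unitary {U : Matrix (Fin 4) (Fin 4) ℂ} (hU : U ∈ Matrix.unitaryGroup (Fin 4) ℂ)
    (z w : Fin 4 → ℂ) :
    star (U.mulVec z) ⬝ᵥ U.mulVec w = star z ⬝ᵥ w := by
  rw [Matrix.star_mulVec, Matrix.dotProduct_mulVec, Matrix.vecMul_vecMul,
    show Uᴴ * U = 1 from (Matrix.mem_unitaryGroup_iff'.mp hU), Matrix.vecMul_one]

theorem omega8_Amap8 {U : Matrix (Fin 4) (Fin 4) ℂ} (hU : U ∈ Matrix.unitaryGroup (Fin 4) ℂ)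
    (u v : E8) : omega8 (Amap8 U u) (Amap8 U v) = omega8 u v := by
  rw [omega8_eq_dot, omega8_eq_dot, cvec8_Amap8, cvec8_Amap8, dot_unitary hU]

theorem theta8_eq_det (a b c d : E8) :
    theta8 a b c d = (Matrix.of ![cvec8 a, cvec8 b, cvec8 c, cvec8 d]).det := by
  have h : !![dz8 0 a, dz8 1 a, dz8 2 a, dz8 3 a;
                dz8 0 b, dz8 1 b, dz8 2 b, dz8 3 b;
                dz8 0 c, dz8 1 c, dz8 2 c, dz8 3 c;
                dz8 0 d, dz8 1 d, dz8 2 d, dz8 3 d] =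
      Matrix.of ![cvec8 a, cvec8 b, cvec8 c, cvec8 d] := by
    ext i j
    fin_cases i <;> fin_cases j <;> rfl
  rw [theta8, h]

theorem theta8_Amap8 (U : Matrix (Fin 4) (Fin 4) ℂ) (a b c d : E8) :
    theta8 (Amap8 U a) (Amap8 U b) (Amap8 U c) (Amap8 U d) = U.det * theta8 a b c d := by
  rw [theta8_eq_det, theta8_eq_det]
  have : (Matrix.of ![cvec8 (Amap8 U a), cvec8 (Amap8 U b), cvec8 (Amap8 U c),
      cvec8 (Amap8 U d)]) = (Matrix.of ![cvec8 a, cvec8 b, cvec8 c, cvec8 d]) * Uᵀ := by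
    ext i j
    fin_cases i <;>
      simp [cvec8_Amap8, Matrix.mul_apply, Matrix.mulVec, dotProduct,
        Fin.sum_univ_four, mul_comm]
  rw [this, Matrix.det_mul, Matrix.det_transpose, mul_comm]

end Aux

/-- Ω₀ = ½ ω₀ ∧ ω₀ + Re θ₀ (wedge expanded by the shuffle convention); consequently every
U ∈ SU(4), viewed as a real-linear map ℝ⁸ → ℝ⁸, satisfies U*Ω₀ = Ω₀, so SU(4) ⊆ Spin(7). -/
theorem Omega0_eq_and_su4_subset_spin7 :
    (∀ a b c d : E8,
      Omega0 a b c d =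
        (1 / 2 : ℝ) *
          (omega8 a b * omega8 c d - omega8 a c * omega8 b d + omega8 a d * omega8 b c
            + omega8 b c * omega8 a d - omega8 b d * omega8 a c + omega8 c d * omega8 a b)
        + (theta8 a b c d).re) ∧
    (∀ U : Matrix.specialUnitaryGroup (Fin 4) ℂ, ∀ a b c d : E8,
      Omega0 (Amap8 (U : Matrix (Fin 4) (Fin 4) ℂ) a)
             (Amap8 (U : Matrix (Fin 4) (Fin 4) ℂ) b)
             (Amap8 (U : Matrix (Fin 4) (Fin 4) ℂ) c)
             (Amap8 (U : Matrix (Fin 4) (Fin 4) ℂ) d) = Omega0 a b c d) := by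
  refine ⟨Omega0_part1, fun U a b c d => ?_⟩
  obtain ⟨hU, hdet⟩ := Matrix.mem_specialUnitaryGroup_iff.mp U.2
  rw [Omega0_part1, Omega0_part1, omega8_Amap8 hU, omega8_Amap8 hU, omega8_Amap8 hU,
    omega8_Amap8 hU, omega8_Amap8 hU, omega8_Amap8 hU, theta8_Amap8, hdet, one_mul]
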